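/- arXiv:1503.06425 — 2 statements merged into one kernel-verified Lean document; each statement's English description precedes it below -/
import Mathlib

section
/- Let (X,T) be a dynamical system on a compact metric space. If (X,T) is sensitive with constant δ, then for every x ∈ X the set Asym_ε(T)(x) = {y ∈ X : ∃N, ∀k ≥ N, d(T^k x, T^k y) ≤ ε} is a set of first category (meagre) in X, for ε = δ/2. -/
/-!
For fixed `N`, the points whose orbit stays `δ / 2`-close to that of `x` from time `N` on form a
closed set. Any two of its points have orbits `δ`-close from time `N` on, whereas sensitivity,
combined with continuity of the first `N` iterates, produces arbitrarily close pairs of points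
whose orbits are `δ`-apart at some time `n ≥ N`. So the set has empty interior, and the asymptotic
set of `x` is a countable union of closed nowhere dense sets.
-/

open Filter Topology Metric

section Sensitivity

variable {X : Type*} [PseudoMetricSpace X]

def IsSensitive (T : X → X) (δ : ℝ) : Prop :=
  ∀ x : X, ∀ ε > 0, ∃ y : X, dist x y < ε ∧ ∃ n : ℕ, δ < dist (T^[n] x) (T^[n] y)

theorem IsSensitive.exists_dist_iterate_gt_of_le {T : X → X} {δ : ℝ} (hsen : IsSensitive T δ)
    (hT : Continuous T) (hδ : 0 < δ) (x : X) {ε : ℝ} (hε : 0 < ε) (N : ℕ) :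
    ∃ y : X, dist x y < ε ∧ ∃ n ≥ N, δ < dist (T^[n] x) (T^[n] y) := by
  have hnear : ∀ᶠ y in 𝓝 x, ∀ n ∈ Finset.range N, dist (T^[n] x) (T^[n] y) < δ :=
    (eventually_all_finset _).2 fun n _ =>
      ((hT.iterate n).continuousAt.eventually (ball_mem_nhds _ hδ)).mono fun _ hy =>
        mem_ball'.1 hy
  obtain ⟨ε', hε', hball⟩ := Metric.mem_nhds_iff.1 (inter_mem (ball_mem_nhds x hε) hnear)
  obtain ⟨y, hxy, n, hn⟩ := hsen x ε' hε'
  obtain ⟨hyε, hy⟩ := hball (mem_ball'.2 hxy)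
  refine ⟨y, mem_ball'.1 hyε, n, ?_, hn⟩
  by_contra! hnN
  exact (hy n (Finset.mem_range.2 hnN)).not_gt hn

theorem isClosed_setOf_forall_ge_dist_iterate_le {T : X → X} (hT : Continuous T) (x : X)
    (r : ℝ) (N : ℕ) : IsClosed {y : X | ∀ k ≥ N, dist (T^[k] x) (T^[k] y) ≤ r} := by
  simp only [Set.ofPred_forall]
  exact isClosed_iInter fun k => isClosed_iInter fun _ =>
    isClosed_le (continuous_const.dist (hT.iterate k)) continuous_const

theorem IsSensitive.interior_setOf_forall_ge_dist_iterate_le_eq_empty {T : X → X} {δ : ℝ}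
    (hsen : IsSensitive T δ) (hT : Continuous T) (hδ : 0 < δ) (x : X) (N : ℕ) :
    interior {y : X | ∀ k ≥ N, dist (T^[k] x) (T^[k] y) ≤ δ / 2} = ∅ := by
  refine Set.eq_empty_of_forall_notMem fun y hy => ?_
  obtain ⟨ε, hε, hball⟩ := isOpen_iff.1 isOpen_interior y hy
  obtain ⟨z, hyz, n, hnN, hn⟩ := hsen.exists_dist_iterate_gt_of_le hT hδ y hε N
  have hyx := interior_subset hy n hnN
  have hzx := interior_subset (hball (mem_ball'.2 hyz)) n hnN
  have hle : dist (T^[n] y) (T^[n] z) ≤ δ :=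
    calc dist (T^[n] y) (T^[n] z) ≤ dist (T^[n] x) (T^[n] y) + dist (T^[n] x) (T^[n] z) :=
          dist_triangle_left _ _ _
      _ ≤ δ / 2 + δ / 2 := add_le_add hyx hzx
      _ = δ := add_halves δ
  exact hle.not_gt hn

end Sensitivity

theorem sensitive_asym_first_category_general
    {X : Type*} [MetricSpace X]
    (T : X → X) (hT : Continuous T) (δ : ℝ) (hδ : 0 < δ)
    (hsen : ∀ x : X, ∀ ε > 0, ∃ y : X, dist x y < ε ∧
      ∃ n : ℕ, dist (T^[n] x) (T^[n] y) > δ) :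
    ∀ x : X, IsMeagre {y : X | ∃ N : ℕ, ∀ k ≥ N, dist (T^[k] x) (T^[k] y) ≤ δ / 2} := by
  intro x
  rw [Set.ofPred_exists]
  refine isMeagre_iUnion fun N => IsNowhereDense.isMeagre ?_
  exact (isClosed_setOf_forall_ge_dist_iterate_le hT x _ N).isNowhereDense_iff.2
    (IsSensitive.interior_setOf_forall_ge_dist_iterate_le_eq_empty hsen hT hδ x N)

theorem sensitive_asym_first_category
    {X : Type*} [MetricSpace X] [CompactSpace X]
    (T : X → X) (hT : Continuous T) (δ : ℝ) (hδ : 0 < δ)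
    (hsen : ∀ x : X, ∀ ε > 0, ∃ y : X, dist x y < ε ∧
      ∃ n : ℕ, dist (T^[n] x) (T^[n] y) > δ) :
    ∀ x : X, IsMeagre {y : X | ∃ N : ℕ, ∀ k ≥ N, dist (T^[k] x) (T^[k] y) ≤ δ / 2} :=
  sensitive_asym_first_category_general T hT δ hδ hsen
end

section
/- Let (X,T) be a transitive dynamical system on a compact metric space. Then exactly one of the following holds: (a) there exists a transitive point which is a mean equicontinuity point, or (b) (X,T) is mean sensitive, i.e., there exists δ > 0 such that for every x ∈ X and every neighborhood U of x there is y ∈ U with limsup_{n→∞} (1/n) Σ_{i=0}^{n-1} d(T^i x, T^i y) > δ. -/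
/-!
The mean distance `D(x, y) = limsup (1/n) ∑_{i<n} d(Tⁱx, Tⁱy)` is a `T`-invariant
pseudometric. If `T` is not mean sensitive, then for every `δ > 0` some point has a
neighbourhood of `D`-diameter at most `δ`; the set of such points is open and backward
invariant, hence dense by transitivity. Intersecting over `δ = 1/(k+1)` gives a residual set
of mean equicontinuity points, which by Baire meets the residual set of transitive points.
Conversely, at a mean equicontinuity point mean sensitivity fails at once.
-/

open Filter Set Topology

lemma limsup_le_limsup_add_limsup {ι : Type*} {f : Filter ι} [f.NeBot] {u v w : ι → ℝ}
    (hu : IsBoundedUnder (· ≥ ·) f u) (hv : IsBoundedUnder (· ≤ ·) f v)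
    (hv' : IsBoundedUnder (· ≥ ·) f v) (hw : IsBoundedUnder (· ≤ ·) f w)
    (hw' : IsBoundedUnder (· ≥ ·) f w) (h : ∀ᶠ i in f, u i ≤ v i + w i) :
    limsup u f ≤ limsup v f + limsup w f :=
  (limsup_le_limsup h hu.isCoboundedUnder_le (isBoundedUnder_le_add hv hw)).trans
    (limsup_add_le hv' hv hw'.isCoboundedUnder_le hw)

lemma limsup_le_limsup_of_tendsto_sub {ι : Type*} {f : Filter ι} [f.NeBot] {u v : ι → ℝ}
    (hu : IsBoundedUnder (· ≥ ·) f u) (hv : IsBoundedUnder (· ≤ ·) f v)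
    (hv' : IsBoundedUnder (· ≥ ·) f v) (h : Tendsto (u - v) f (𝓝 0)) :
    limsup u f ≤ limsup v f := by
  calc limsup u f ≤ limsup v f + limsup (u - v) f :=
        limsup_le_limsup_add_limsup hu hv hv' h.isBoundedUnder_le h.isBoundedUnder_ge
          (Eventually.of_forall fun i => by simp)
    _ = limsup v f := by rw [h.limsup_eq, add_zero]

section MeanDist

variable {X : Type*} [PseudoMetricSpace X] (T : X → X)

noncomputable def meanDistAvg (x y : X) (n : ℕ) : ℝ :=
  (∑ i ∈ Finset.range n, dist (T^[i] x) (T^[i] y)) / n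

noncomputable def meanDist (x y : X) : ℝ := limsup (meanDistAvg T x y) atTop

lemma meanDistAvg_comm (x y : X) : meanDistAvg T x y = meanDistAvg T y x := by
  funext n
  simp only [meanDistAvg, dist_comm]

lemma meanDistAvg_le_add (x y z : X) (n : ℕ) :
    meanDistAvg T x z n ≤ meanDistAvg T x y n + meanDistAvg T y z n := by
  rw [meanDistAvg, meanDistAvg, meanDistAvg, ← add_div, ← Finset.sum_add_distrib]
  gcongr
  exact dist_triangle _ _ _

lemma meanDistAvg_eq_birkhoffAverage (x y : X) (n : ℕ) :
    meanDistAvg T x y n = birkhoffAverage ℝ (Prod.map T T) (Function.uncurry dist) n (x, y) := by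
  simp [meanDistAvg, birkhoffAverage, birkhoffSum, Prod.map_iterate, div_eq_inv_mul]

lemma isBoundedUnder_ge_meanDistAvg (x y : X) :
    IsBoundedUnder (· ≥ ·) atTop (meanDistAvg T x y) :=
  isBoundedUnder_of ⟨0, fun n => by unfold meanDistAvg; positivity⟩

lemma meanDist_comm (x y : X) : meanDist T x y = meanDist T y x := by
  rw [meanDist, meanDist, meanDistAvg_comm]

section BoundedSpace

variable [BoundedSpace X]

lemma dist_le_diam_univ (x y : X) : dist x y ≤ Metric.diam (univ : Set X) :=
  Metric.dist_le_diam_of_mem (Bornology.isBounded_univ.2 ‹_›) (mem_univ x) (mem_univ y)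

lemma isBoundedUnder_le_meanDistAvg (x y : X) :
    IsBoundedUnder (· ≤ ·) atTop (meanDistAvg T x y) := by
  refine isBoundedUnder_of ⟨Metric.diam (univ : Set X), fun n => ?_⟩
  refine div_le_of_le_mul₀ n.cast_nonneg Metric.diam_nonneg ?_
  simpa [mul_comm] using Finset.sum_le_card_nsmul (Finset.range n) _ _ fun i _ =>
    dist_le_diam_univ (T^[i] x) (T^[i] y)

lemma tendsto_meanDistAvg_sub_meanDistAvg_apply (x y : X) :
    Tendsto (meanDistAvg T x y - meanDistAvg T (T x) (T y)) atTop (𝓝 0) := by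
  have hdist : Bornology.IsBounded (range (Function.uncurry dist : X × X → ℝ)) :=
    (Metric.isBounded_Icc 0 (Metric.diam (univ : Set X))).subset <|
      range_subset_iff.2 fun p => ⟨dist_nonneg, dist_le_diam_univ p.1 p.2⟩
  simpa [Pi.sub_def, meanDistAvg_eq_birkhoffAverage] using
    (tendsto_birkhoffAverage_apply_sub_birkhoffAverage' ℝ hdist (Prod.map T T) (x, y)).neg

lemma meanDist_le_add (x y z : X) : meanDist T x z ≤ meanDist T x y + meanDist T y z :=
  limsup_le_limsup_add_limsup (isBoundedUnder_ge_meanDistAvg T x z)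
    (isBoundedUnder_le_meanDistAvg T x y) (isBoundedUnder_ge_meanDistAvg T x y)
    (isBoundedUnder_le_meanDistAvg T y z) (isBoundedUnder_ge_meanDistAvg T y z)
    (Eventually.of_forall (meanDistAvg_le_add T x y z))

lemma meanDist_apply (x y : X) : meanDist T (T x) (T y) = meanDist T x y := by
  have h := tendsto_meanDistAvg_sub_meanDistAvg_apply T x y
  refine le_antisymm (limsup_le_limsup_of_tendsto_sub (isBoundedUnder_ge_meanDistAvg T _ _)
    (isBoundedUnder_le_meanDistAvg T x y) (isBoundedUnder_ge_meanDistAvg T x y) ?_)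
    (limsup_le_limsup_of_tendsto_sub (isBoundedUnder_ge_meanDistAvg T x y)
      (isBoundedUnder_le_meanDistAvg T _ _) (isBoundedUnder_ge_meanDistAvg T _ _) h)
  simpa [Pi.sub_def] using h.neg

lemma meanDist_iterate (n : ℕ) (x y : X) : meanDist T (T^[n] x) (T^[n] y) = meanDist T x y := by
  induction n with
  | zero => rfl
  | succ n ih => rw [Function.iterate_succ_apply', Function.iterate_succ_apply', meanDist_apply, ih]

end BoundedSpace

end MeanDist

section Transitive

variable {X : Type*} [TopologicalSpace X]

def IsTopologicallyTransitive (T : X → X) : Prop :=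
  ∀ U V : Set X, IsOpen U → IsOpen V → U.Nonempty → V.Nonempty →
    ∃ n : ℕ, (T^[n] '' U ∩ V).Nonempty

variable {T : X → X}

lemma IsTopologicallyTransitive.dense_iUnion_preimage_iterate
    (htrans : IsTopologicallyTransitive T) {U : Set X} (hUo : IsOpen U) (hU : U.Nonempty) :
    Dense (⋃ n : ℕ, T^[n] ⁻¹' U) := by
  refine dense_iff_inter_open.2 fun V hVo hV => ?_
  obtain ⟨n, _, ⟨v, hv, rfl⟩, hvU⟩ := htrans V U hVo hUo hV hU
  exact ⟨v, hv, mem_iUnion.2 ⟨n, hvU⟩⟩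

lemma IsTopologicallyTransitive.dense_of_preimage_iterate_subset
    (htrans : IsTopologicallyTransitive T) {U : Set X} (hUo : IsOpen U) (hU : U.Nonempty)
    (hinv : ∀ n : ℕ, T^[n] ⁻¹' U ⊆ U) : Dense U :=
  (htrans.dense_iUnion_preimage_iterate hUo hU).mono (iUnion_subset hinv)

lemma IsTopologicallyTransitive.setOf_denseRange_iterate_mem_residual
    [SecondCountableTopology X] (htrans : IsTopologicallyTransitive T) (hT : Continuous T) :
    {x | DenseRange fun n : ℕ => T^[n] x} ∈ residual X := by
  obtain ⟨B, hBc, hB_empty, hB⟩ := TopologicalSpace.exists_countable_basis X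
  have hres : ∀ b ∈ B, (⋃ n : ℕ, T^[n] ⁻¹' b) ∈ residual X := fun b hb =>
    residual_of_dense_open (isOpen_iUnion fun n => (hB.isOpen hb).preimage (hT.iterate n))
      (htrans.dense_iUnion_preimage_iterate (hB.isOpen hb)
        (nonempty_iff_ne_empty.2 fun h => hB_empty (h ▸ hb)))
  filter_upwards [(countable_bInter_mem hBc).2 hres] with x hx
  refine hB.dense_iff.2 fun b hb _ => ?_
  obtain ⟨n, hn⟩ := mem_iUnion.1 (mem_iInter₂.1 hx b hb)
  exact ⟨_, hn, n, rfl⟩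

end Transitive

section MeanStable

variable {X : Type*} [PseudoMetricSpace X]

def IsMeanSensitive (T : X → X) : Prop :=
  ∃ δ > 0, ∀ x : X, ∀ U : Set X, IsOpen U → x ∈ U → ∃ y ∈ U, meanDist T x y > δ

def IsMeanEquicontinuousAt (T : X → X) (x : X) : Prop :=
  ∀ ε > 0, ∃ δ > 0, ∀ y : X, dist x y < δ → meanDist T x y < ε

def meanStableSet (T : X → X) (δ : ℝ) : Set X :=
  {x | ∃ U ∈ 𝓝 x, ∀ y ∈ U, ∀ z ∈ U, meanDist T y z ≤ δ}

variable {T : X → X}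

lemma isMeanSensitive_of_isEmpty [IsEmpty X] : IsMeanSensitive T :=
  ⟨1, one_pos, isEmptyElim⟩

lemma IsMeanEquicontinuousAt.not_isMeanSensitive {x : X} (hx : IsMeanEquicontinuousAt T x) :
    ¬ IsMeanSensitive T := by
  rintro ⟨δ, hδ, hsens⟩
  obtain ⟨r, hr, hxr⟩ := hx δ hδ
  obtain ⟨y, hy, hxy⟩ := hsens x (Metric.ball x r) Metric.isOpen_ball (Metric.mem_ball_self hr)
  exact (hxr y (Metric.mem_ball'.1 hy)).not_gt hxy

lemma isOpen_meanStableSet (T : X → X) (δ : ℝ) : IsOpen (meanStableSet T δ) :=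
  isOpen_iff_mem_nhds.2 fun _ ⟨U, hU, hδ⟩ =>
    mem_of_superset (interior_mem_nhds.2 hU) fun _ hz =>
      ⟨U, mem_interior_iff_mem_nhds.1 hz, hδ⟩

variable [BoundedSpace X]

lemma preimage_iterate_meanStableSet_subset (hT : Continuous T) (δ : ℝ) (n : ℕ) :
    T^[n] ⁻¹' meanStableSet T δ ⊆ meanStableSet T δ := fun _ ⟨U, hU, hδ⟩ =>
  ⟨T^[n] ⁻¹' U, (hT.iterate n).continuousAt.preimage_mem_nhds hU, fun y hy z hz =>
    meanDist_iterate T n y z ▸ hδ _ hy _ hz⟩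

lemma mem_meanStableSet_of_meanDist_le {x : X} {U : Set X} {δ : ℝ} (hU : U ∈ 𝓝 x)
    (hδ : ∀ y ∈ U, meanDist T x y ≤ δ) : x ∈ meanStableSet T (2 * δ) :=
  ⟨U, hU, fun y hy z hz => calc
    meanDist T y z ≤ meanDist T y x + meanDist T x z := meanDist_le_add T y x z
    _ ≤ 2 * δ := by linarith [meanDist_comm T x y, hδ y hy, hδ z hz]⟩

lemma meanStableSet_mem_residual (htrans : IsTopologicallyTransitive T) (hT : Continuous T)
    (hns : ¬ IsMeanSensitive T) {δ : ℝ} (hδ : 0 < δ) : meanStableSet T δ ∈ residual X := by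
  unfold IsMeanSensitive at hns
  push Not at hns
  obtain ⟨x, U, hUo, hxU, hU⟩ := hns (δ / 2) (half_pos hδ)
  have hx : x ∈ meanStableSet T δ := by
    convert mem_meanStableSet_of_meanDist_le (hUo.mem_nhds hxU) hU
    ring
  exact residual_of_dense_open (isOpen_meanStableSet T δ)
    (htrans.dense_of_preimage_iterate_subset (isOpen_meanStableSet T δ) ⟨x, hx⟩
      (preimage_iterate_meanStableSet_subset hT δ))

lemma setOf_isMeanEquicontinuousAt_mem_residual (htrans : IsTopologicallyTransitive T)
    (hT : Continuous T) (hns : ¬ IsMeanSensitive T) :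
    {x | IsMeanEquicontinuousAt T x} ∈ residual X := by
  filter_upwards [countable_iInter_mem.2 fun k : ℕ =>
    meanStableSet_mem_residual htrans hT hns (Nat.one_div_pos_of_nat (n := k))] with x hx ε hε
  obtain ⟨k, hk⟩ := exists_nat_one_div_lt hε
  obtain ⟨U, hU, hUδ⟩ := mem_iInter.1 hx k
  obtain ⟨r, hr, hrU⟩ := Metric.mem_nhds_iff.1 hU
  exact ⟨r, hr, fun y hy =>
    (hUδ x (mem_of_mem_nhds hU) y (hrU (Metric.mem_ball'.2 hy))).trans_lt hk⟩

end MeanStable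

theorem transitive_mean_equicontinuity_dichotomy
    {X : Type*} [MetricSpace X] [CompactSpace X]
    (T : X → X) (hT : Continuous T)
    (htrans : ∀ U V : Set X, IsOpen U → IsOpen V → U.Nonempty → V.Nonempty →
      ∃ n : ℕ, (T^[n] '' U ∩ V).Nonempty) :
    Xor'
      (∃ x : X, Dense {y : X | ∃ n : ℕ, y = T^[n] x} ∧
        ∀ ε > 0, ∃ δ > 0, ∀ y : X, dist x y < δ →
          Filter.limsup (fun n : ℕ =>
            (∑ i ∈ Finset.range n, dist (T^[i] x) (T^[i] y)) / n) Filter.atTop < ε)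
      (∃ δ > 0, ∀ x : X, ∀ U : Set X, IsOpen U → x ∈ U →
        ∃ y ∈ U, Filter.limsup (fun n : ℕ =>
          (∑ i ∈ Finset.range n, dist (T^[i] x) (T^[i] y)) / n) Filter.atTop > δ) := by
  change Xor (∃ x, _ ∧ IsMeanEquicontinuousAt T x) (IsMeanSensitive T)
  refine xor_iff_iff_not.2 ⟨fun ⟨x, _, hx⟩ => hx.not_isMeanSensitive, fun hns => ?_⟩
  have : Nonempty X := not_isEmpty_iff.1 fun _ => hns isMeanSensitive_of_isEmpty
  obtain ⟨x, hx_orbit, hx_eq⟩ := (dense_of_mem_residual (inter_mem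
    (IsTopologicallyTransitive.setOf_denseRange_iterate_mem_residual htrans hT)
    (setOf_isMeanEquicontinuousAt_mem_residual htrans hT hns))).nonempty
  refine ⟨x, ?_, hx_eq⟩
  simpa only [DenseRange, range, eq_comm, mem_ofPred_eq] using hx_orbit
end
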